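/- Every graph in the family 𝒢 of order n satisfies γ_dR(G) = 11n/10; that is, for every graph G, the graph G_Q of order n = 10·|V(G)| satisfies γ_dR(G_Q) = 11·|V(G)|. -/

import Mathlib

/-- A double Roman dominating function on a simple graph `G`:
values in `{0,1,2,3}`, every vertex with value `0` has two neighbors with value `2`
or one neighbor with value `3`, and every vertex with value `1` has a neighbor with
value at least `2`. -/
def IsDRDF {V : Type*} (G : SimpleGraph V) (f : V → ℕ) : Prop :=
  (∀ v, f v ≤ 3) ∧
  (∀ v, f v = 0 →
    (∃ u w, u ≠ w ∧ G.Adj v u ∧ G.Adj v w ∧ f u = 2 ∧ f w = 2) ∨ ∃ u, G.Adj v u ∧ f u = 3) ∧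
  (∀ v, f v = 1 → ∃ u, G.Adj v u ∧ 2 ≤ f u)

/-- The double Roman domination number: the minimum weight of a DRDF. -/
noncomputable def gammaDR {V : Type*} [Fintype V] (G : SimpleGraph V) : ℕ :=
  sInf {w | ∃ f, IsDRDF G f ∧ ∑ v, f v = w}

/-- The vertices that a copy of `Q` (two `5`-cycles joined by an edge) contributes to
`G_Q` besides the identified degree-three vertex: the first `5`-cycle minus its vertex
`0` (which is identified with a vertex of `G`), and the whole second `5`-cycle. -/
abbrev QTail : Type := {x : Fin 5 // x.val ≠ 0} ⊕ Fin 5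

/-- Base relation for `G_Q`: `G` itself together with, for each vertex `w` of `G`, a
copy of `Q` whose degree-three vertex (vertex `0` of the first `5`-cycle) is identified
with `w`. -/
def gqR {W : Type} (G : SimpleGraph W) :
    (W ⊕ W × QTail) → (W ⊕ W × QTail) → Prop
  | .inl a, .inl b => G.Adj a b
  | .inl a, .inr (w, .inl x) => a = w ∧ (x.1.val = 1 ∨ x.1.val = 4)
  | .inl a, .inr (w, .inr y) => a = w ∧ y.val = 0
  | .inr (w, .inl x), .inr (w', .inl y) => w = w' ∧ (x.1.val + 1) % 5 = y.1.val
  | .inr (w, .inr x), .inr (w', .inr y) => w = w' ∧ (x.val + 1) % 5 = y.val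
  | _, _ => False

/-- The graph `G_Q` obtained from `G` by attaching, at every vertex of `G`, a copy of
`Q` identified at a vertex of degree three. -/
def GQ {W : Type} (G : SimpleGraph W) : SimpleGraph (W ⊕ W × QTail) :=
  SimpleGraph.fromRel (gqR G)

/-
In the copy of `Q` at a vertex `w` of `G`, call `w = x₀, x₁, …, x₄` the first `5`-cycle and
`y₀, …, y₄` the second one, with `y₀` adjacent to `w`. For any DRDF `f`, exhausting the values
`{0,1,2,3}` shows that the first cycle carries weight at least `5`, and at least `6` when
`f w > 0`; the second cycle carries weight at least `6`, or at least `5` when `f w ≥ 2`. So every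
copy carries weight at least `11`. Conversely, the value `3` on `w`, `x₂`, `y₂` and `2` on `y₄`
gives a DRDF of weight exactly `11` on every copy.
-/

def DRDominated (x : ℕ) (ys : List ℕ) : Prop :=
  (x = 0 → 2 ≤ ys.count 2 ∨ 3 ∈ ys) ∧ (x = 1 → ∃ y ∈ ys, 2 ≤ y)

instance (x : ℕ) (ys : List ℕ) : Decidable (DRDominated x ys) :=
  inferInstanceAs (Decidable (_ ∧ _))

theorem IsDRDF.drDominated {V : Type*} {G : SimpleGraph V} {f : V → ℕ} (hf : IsDRDF G f)
    {v : V} {l : List V} (hadj : ∀ u, G.Adj v u → u ∈ l) :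
    DRDominated (f v) (l.map f) := by
  obtain ⟨-, h0, h1⟩ := hf
  refine ⟨fun hv => ?_, fun hv => ?_⟩
  · rcases h0 v hv with ⟨u, u', hne, hu, hu', fu, fu'⟩ | ⟨u, hu, fu⟩
    · have hsub : List.Subperm [u, u'] l :=
        List.Nodup.subperm (by simp [hne]) (by simp [hadj u hu, hadj u' hu'])
      have := hsub.countP_le ((· == 2) ∘ f)
      left
      rw [List.count, List.countP_map]
      simpa [fu, fu'] using this
    · exact Or.inr (fu ▸ List.mem_map_of_mem (hadj u hu))
  · obtain ⟨u, hu, h2⟩ := h1 v hv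
    exact ⟨f u, List.mem_map_of_mem (hadj u hu), h2⟩

theorem le_sum_of_drDominated_off_zero {c : Fin 5 → ℕ} (hc : ∀ i, c i ≤ 3)
    (h : ∀ i ≠ 0, DRDominated (c i) [c (i + 1), c (i - 1)]) :
    5 + min (c 0) 1 ≤ ∑ i, c i := by
  have key : ∀ c₀ c₁ c₂ c₃ c₄ : Fin 4, DRDominated c₁ [c₂, c₀] → DRDominated c₂ [c₃, c₁] →
      DRDominated c₃ [c₄, c₂] → DRDominated c₄ [c₀, c₃] →
      5 + min (c₀ : ℕ) 1 ≤ (c₀ : ℕ) + c₁ + c₂ + c₃ + c₄ := by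
    decide
  rw [Fin.sum_univ_five]
  exact key ⟨_, Nat.lt_succ_of_le (hc 0)⟩ ⟨_, Nat.lt_succ_of_le (hc 1)⟩
    ⟨_, Nat.lt_succ_of_le (hc 2)⟩ ⟨_, Nat.lt_succ_of_le (hc 3)⟩ ⟨_, Nat.lt_succ_of_le (hc 4)⟩
    (h 1 (by decide)) (h 2 (by decide)) (h 3 (by decide)) (h 4 (by decide))

theorem le_sum_of_drDominated_with_neighbor {a : ℕ} {c : Fin 5 → ℕ} (ha : a ≤ 3)
    (hc : ∀ i, c i ≤ 3)
    (h₀ : DRDominated (c 0) [c 1, c 4, a])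
    (h : ∀ i ≠ 0, DRDominated (c i) [c (i + 1), c (i - 1)]) :
    6 ≤ ∑ i, c i + if 2 ≤ a then 1 else 0 := by
  have key : ∀ a c₀ c₁ c₂ c₃ c₄ : Fin 4, DRDominated c₀ [c₁, c₄, a] →
      DRDominated c₁ [c₂, c₀] → DRDominated c₂ [c₃, c₁] →
      DRDominated c₃ [c₄, c₂] → DRDominated c₄ [c₀, c₃] →
      6 ≤ (c₀ : ℕ) + c₁ + c₂ + c₃ + c₄ + if 2 ≤ (a : ℕ) then 1 else 0 := by
    decide
  rw [Fin.sum_univ_five]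
  exact key ⟨_, Nat.lt_succ_of_le ha⟩ ⟨_, Nat.lt_succ_of_le (hc 0)⟩
    ⟨_, Nat.lt_succ_of_le (hc 1)⟩ ⟨_, Nat.lt_succ_of_le (hc 2)⟩ ⟨_, Nat.lt_succ_of_le (hc 3)⟩
    ⟨_, Nat.lt_succ_of_le (hc 4)⟩
    h₀ (h 1 (by decide)) (h 2 (by decide)) (h 3 (by decide)) (h 4 (by decide))

section Copies

variable {W : Type} {G : SimpleGraph W} {w : W} {u : W ⊕ W × QTail}

def firstCycle (w : W) (i : Fin 5) : W ⊕ W × QTail :=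
  if h : i = 0 then .inl w else .inr (w, .inl ⟨i, fun h' => h (Fin.ext h')⟩)

def secondCycle (w : W) (i : Fin 5) : W ⊕ W × QTail :=
  .inr (w, .inr i)

theorem firstCycle_of_ne_zero {i : Fin 5} (hi : i ≠ 0) :
    firstCycle w i = .inr (w, .inl ⟨i, fun h' => hi (Fin.ext h')⟩) :=
  dif_neg hi

theorem Fin.val_add_one_mod_five_eq_iff {i j : Fin 5} : (i.val + 1) % 5 = j.val ↔ j = i + 1 := by
  revert i j; decide

theorem GQ_adj_firstCycle {i : Fin 5} (hi : i ≠ 0) (h : (GQ G).Adj (firstCycle w i) u) :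
    u = firstCycle w (i + 1) ∨ u = firstCycle w (i - 1) := by
  rw [firstCycle_of_ne_zero hi, GQ, SimpleGraph.fromRel_adj] at h
  obtain ⟨-, h⟩ := h
  rcases u with b | ⟨w', ⟨j, hj⟩ | j⟩ <;>
    simp only [gqR, Fin.val_add_one_mod_five_eq_iff, false_or, or_false] at h
  · obtain ⟨rfl, h | h⟩ := h
    · obtain rfl : i = 1 := Fin.ext h
      exact .inr rfl
    · obtain rfl : i = 4 := Fin.ext h
      exact .inl rfl
  · obtain ⟨rfl, rfl⟩ | ⟨rfl, rfl⟩ := h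
    · exact .inl (firstCycle_of_ne_zero (fun h' => hj (congrArg Fin.val h'))).symm
    · exact .inr (by
        rw [add_sub_cancel_right, firstCycle_of_ne_zero (fun h' => hj (congrArg Fin.val h'))])

theorem GQ_adj_secondCycle {i : Fin 5} (hi : i ≠ 0) (h : (GQ G).Adj (secondCycle w i) u) :
    u = secondCycle w (i + 1) ∨ u = secondCycle w (i - 1) := by
  rw [secondCycle, GQ, SimpleGraph.fromRel_adj] at h
  obtain ⟨-, h⟩ := h
  rcases u with b | ⟨w', j | j⟩ <;>
    simp only [gqR, Fin.val_add_one_mod_five_eq_iff, false_or, or_false] at h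
  · exact absurd (Fin.ext h.2) hi
  · obtain ⟨rfl, rfl⟩ | ⟨rfl, rfl⟩ := h
    · exact .inl rfl
    · exact .inr (by rw [secondCycle, add_sub_cancel_right])

theorem GQ_adj_secondCycle_zero (h : (GQ G).Adj (secondCycle w 0) u) :
    u = secondCycle w 1 ∨ u = secondCycle w 4 ∨ u = .inl w := by
  rw [secondCycle, GQ, SimpleGraph.fromRel_adj] at h
  obtain ⟨-, h⟩ := h
  rcases u with b | ⟨w', j | j⟩ <;>
    simp only [gqR, Fin.val_add_one_mod_five_eq_iff, false_or, or_false] at h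
  · exact .inr (.inr (by rw [h.1]))
  · obtain ⟨rfl, rfl⟩ | ⟨rfl, h⟩ := h
    · exact .inl rfl
    · obtain rfl : j = 4 := by revert j; decide
      exact .inr (.inl rfl)

theorem sum_firstCycle (f : W ⊕ W × QTail → ℕ) (w : W) :
    ∑ i, f (firstCycle w i) =
      f (.inl w) + ∑ x : {x : Fin 5 // x.val ≠ 0}, f (.inr (w, .inl x)) := by
  have huniv : (Finset.univ : Finset {x : Fin 5 // x.val ≠ 0}) =
      {⟨1, by decide⟩, ⟨2, by decide⟩, ⟨3, by decide⟩, ⟨4, by decide⟩} := by decide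
  simp [Fin.sum_univ_five, huniv, add_assoc, firstCycle]

theorem sum_GQ_eq [Fintype W] (f : W ⊕ W × QTail → ℕ) :
    ∑ v, f v = ∑ w, (∑ i, f (firstCycle w i) + ∑ i, f (secondCycle w i)) := by
  simp only [sum_firstCycle, secondCycle, Fintype.sum_sum_type, Fintype.sum_prod_type,
    Finset.sum_add_distrib, add_assoc]

theorem IsDRDF.eleven_le_sum_copy {f : W ⊕ W × QTail → ℕ} (hf : IsDRDF (GQ G) f) (w : W) :
    11 ≤ ∑ i, f (firstCycle w i) + ∑ i, f (secondCycle w i) := by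
  have h₁ := le_sum_of_drDominated_off_zero (c := f ∘ firstCycle w) (fun i => hf.1 _)
    fun i hi => hf.drDominated (l := [_, _]) fun u hu => by simpa using GQ_adj_firstCycle hi hu
  have h₂ := le_sum_of_drDominated_with_neighbor (c := f ∘ secondCycle w) (hf.1 (.inl w))
    (fun i => hf.1 _)
    (hf.drDominated (l := [_, _, _]) fun u hu => by simpa using GQ_adj_secondCycle_zero hu)
    fun i hi => hf.drDominated (l := [_, _]) fun u hu => by simpa using GQ_adj_secondCycle hi hu
  simp only [Function.comp_apply] at h₁ h₂
  rw [firstCycle, dif_pos rfl] at h₁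
  split_ifs at h₂ <;> omega

end Copies

def optimalDRDF {W : Type} : W ⊕ W × QTail → ℕ
  | .inl _ => 3
  | .inr (_, .inl x) => if x.1 = 2 then 3 else 0
  | .inr (_, .inr y) => if y = 2 then 3 else if y = 4 then 2 else 0

theorem isDRDF_optimalDRDF {W : Type} (G : SimpleGraph W) : IsDRDF (GQ G) optimalDRDF := by
  refine ⟨?_, ?_, ?_⟩
  · rintro (a | ⟨w, x | y⟩) <;> simp only [optimalDRDF] <;> (try split_ifs) <;> omega
  · rintro (a | ⟨w, ⟨x, hx⟩ | y⟩) hv <;> simp only [optimalDRDF] at hv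
    · omega
    · right
      fin_cases x
      · exact absurd rfl hx
      · exact ⟨.inr (w, .inl ⟨2, by decide⟩), by simp [GQ, gqR], rfl⟩
      · simp at hv
      · exact ⟨.inr (w, .inl ⟨2, by decide⟩), by simp [GQ, gqR], rfl⟩
      · exact ⟨.inl w, by simp [GQ, gqR], rfl⟩
    · right
      fin_cases y
      · exact ⟨.inl w, by simp [GQ, gqR], rfl⟩
      · exact ⟨.inr (w, .inr 2), by simp [GQ, gqR], rfl⟩
      · simp at hv
      · exact ⟨.inr (w, .inr 2), by simp [GQ, gqR], rfl⟩
      · simp at hv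
  · rintro (a | ⟨w, x | y⟩) hv <;> simp only [optimalDRDF] at hv <;> (try split_ifs at hv) <;>
      omega

theorem sum_optimalDRDF {W : Type} [Fintype W] :
    ∑ v : W ⊕ W × QTail, optimalDRDF v = 11 * Fintype.card W := by
  rw [sum_GQ_eq]
  simp [Fin.sum_univ_five, optimalDRDF, firstCycle, secondCycle, mul_comm]

/-- Every member of `𝒢` satisfies `γ_dR = 11n/10`: for every graph `G`, the graph
`G_Q` has order `10·|V(G)|` and `γ_dR(G_Q) = 11·|V(G)|`. -/
theorem gammaDR_GQ_eq {W : Type} [Fintype W] (G : SimpleGraph W) :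
    Fintype.card (W ⊕ W × QTail) = 10 * Fintype.card W ∧
      gammaDR (GQ G) = 11 * Fintype.card W := by
  have hQTail : Fintype.card QTail = 9 := by decide
  refine ⟨by rw [Fintype.card_sum, Fintype.card_prod, hQTail]; ring, ?_⟩
  refine IsLeast.csInf_eq ⟨⟨optimalDRDF, isDRDF_optimalDRDF G, sum_optimalDRDF⟩, ?_⟩
  rintro _ ⟨f, hf, rfl⟩
  calc 11 * Fintype.card W = ∑ _w : W, 11 := by simp [mul_comm]
    _ ≤ ∑ w, (∑ i, f (firstCycle w i) + ∑ i, f (secondCycle w i)) :=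
        Finset.sum_le_sum fun w _ => hf.eleven_le_sum_copy w
    _ = ∑ v, f v := (sum_GQ_eq f).symm
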